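/- For every real L ≥ e, the unique root ξ*(L) ∈ [0,1] of ξ^L + ξ − 1 = 0 satisfies ξ*(L) ≥ 1 − (log L)/L. -/
import Mathlib


open Real

/-- For real `L ≥ e`, any root `ξ ≥ e`, any root `ξ ∈ [0,1]` -/
theorem stmt4 (L : ℝ) (hL : Real.exp 1 ≤ L) (ξ : ℝ) (hξ : ξ ∈ Set.Icc (0:ℝ) 1)
    (hroot : ξ ^ L + ξ - 1 = 0) :
    1 - Real.log L / L ≤ ξ := by
  obtain ⟨hξ0, hξ1⟩ := hξ
  have hL0 : (0:ℝ) < L := lt_of_lt_of_le (Real.exp_pos 1) hL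
  have hlog : (1:ℝ) ≤ Real.log L := by
    have := Real.log_le_log (Real.exp_pos 1) hL
    simpa using this
  by_contra h
  push_neg at h
  set x := 1 - ξ with hx
  have hxgt : Real.log L / L < x := by
    rw [hx]; linarith
  have hx0 : 0 < x := lt_of_le_of_lt (by positivity) hxgt
  have hξe : ξ ≤ Real.exp (-x) := by
    have := Real.add_one_le_exp (-x)
    linarith
  have h1 : ξ ^ L ≤ Real.exp (-x) ^ L :=
    Real.rpow_le_rpow hξ0 hξe hL0.le
  have h2 : Real.exp (-x) ^ L = Real.exp (-x * L) := by
    rw [← Real.exp_mul]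
  have h3 : Real.exp (-x * L) < Real.exp (-Real.log L) := by
    apply Real.exp_lt_exp.2
    have : Real.log L < x * L := by
      rw [div_lt_iff₀ hL0] at hxgt; linarith
    linarith
  have h4 : Real.exp (-Real.log L) = 1 / L := by
    rw [Real.exp_neg, Real.exp_log hL0, one_div]
  have h5 : ξ ^ L = x := by rw [hx]; linarith
  have h6 : (1:ℝ) / L ≤ Real.log L / L := by gcongr
  linarith [h1, h3]
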